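/- (Lower semicontinuity of KL loss.) Let 𝒜* = {g ∈ L∞(ℝ^p) : 0 ≤ g ≤ C a.e., ∫ g ≤ 1} with C = (2π v_y)^{−p/2}. If g_i ∈ 𝒜* and g_i → g ∈ 𝒜* in the weak* topology (∫ f g_i → ∫ f g for all f ∈ L¹), then liminf_{i→∞} L(μ, g_i) ≥ L(μ, g) for every μ ∈ ℝ^p. -/

import Mathlib

open MeasureTheory Filter
open scoped ENNReal Classical

noncomputable def gauss (p : ℕ) (v : ℝ) (μ z : EuclideanSpace ℝ (Fin p)) : ℝ :=
  (2 * Real.pi * v) ^ (-(p : ℝ) / 2) * Real.exp (-‖z - μ‖ ^ 2 / (2 * v))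

/-- Kullback–Leibler loss of the density estimate `g` for the true density `gauss p vy μ`. -/
noncomputable def klLoss (p : ℕ) (vy : ℝ) (μ : EuclideanSpace ℝ (Fin p))
    (g : EuclideanSpace ℝ (Fin p) → ℝ) : ℝ≥0∞ :=
  if (∀ᵐ y, 0 < g y) ∧
      Integrable (fun y => gauss p vy μ y * Real.log (gauss p vy μ y / g y)) then
    ENNReal.ofReal (∫ y, gauss p vy μ y * Real.log (gauss p vy μ y / g y))
  else ⊤

noncomputable def klRisk (p : ℕ) (vx vy : ℝ) (μ : EuclideanSpace ℝ (Fin p))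
    (phat : EuclideanSpace ℝ (Fin p) → EuclideanSpace ℝ (Fin p) → ℝ) : ℝ≥0∞ :=
  ∫⁻ x, klLoss p vy μ (phat x) * ENNReal.ofReal (gauss p vx μ x)

def IsProc (p : ℕ) (phat : EuclideanSpace ℝ (Fin p) → EuclideanSpace ℝ (Fin p) → ℝ) : Prop :=
  ∀ x, (∀ᵐ y, 0 ≤ phat x y) ∧ (∫ y, phat x y) = 1

def Admissible (p : ℕ) (vx vy : ℝ)
    (phat : EuclideanSpace ℝ (Fin p) → EuclideanSpace ℝ (Fin p) → ℝ) : Prop :=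
  IsProc p phat ∧
    ¬ ∃ q, IsProc p q ∧ (∀ μ, klRisk p vx vy μ q ≤ klRisk p vx vy μ phat) ∧
      ∃ μ, klRisk p vx vy μ q < klRisk p vx vy μ phat

noncomputable def marg (p : ℕ) (v : ℝ) (π : EuclideanSpace ℝ (Fin p) → ℝ)
    (z : EuclideanSpace ℝ (Fin p)) : ℝ :=
  ∫ μ, gauss p v μ z * π μ

noncomputable def bayesRule (p : ℕ) (vx vy : ℝ) (π : EuclideanSpace ℝ (Fin p) → ℝ)
    (x y : EuclideanSpace ℝ (Fin p)) : ℝ :=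
  (∫ μ, gauss p vx μ x * gauss p vy μ y * π μ) / marg p vx π x

noncomputable def postMean (p : ℕ) (v : ℝ) (π : EuclideanSpace ℝ (Fin p) → ℝ)
    (z : EuclideanSpace ℝ (Fin p)) : EuclideanSpace ℝ (Fin p) :=
  (marg p v π z)⁻¹ • ∫ μ, (gauss p v μ z * π μ) • μ

noncomputable def qRisk (p : ℕ) (v : ℝ) (μ : EuclideanSpace ℝ (Fin p))
    (est : EuclideanSpace ℝ (Fin p) → EuclideanSpace ℝ (Fin p)) : ℝ :=
  ∫ z, gauss p v μ z * ‖est z - μ‖ ^ 2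

noncomputable def bKL (p : ℕ) (vx vy : ℝ) (ρ : EuclideanSpace ℝ (Fin p) → ℝ)
    (phat : EuclideanSpace ℝ (Fin p) → EuclideanSpace ℝ (Fin p) → ℝ) : ℝ≥0∞ :=
  ∫⁻ μ, klRisk p vx vy μ phat * ENNReal.ofReal (ρ μ)

noncomputable def bQ (p : ℕ) (v : ℝ) (ρ : EuclideanSpace ℝ (Fin p) → ℝ)
    (est : EuclideanSpace ℝ (Fin p) → EuclideanSpace ℝ (Fin p)) : ℝ :=
  ∫ μ, ρ μ * qRisk p v μ est

noncomputable def margGrad (p : ℕ) (v : ℝ) (π : EuclideanSpace ℝ (Fin p) → ℝ)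
    (z : EuclideanSpace ℝ (Fin p)) : EuclideanSpace ℝ (Fin p) :=
  ∫ μ, gauss p v μ z • gradient π μ

/-- The uniform bound `C = (2πv_y)^(-p/2)` on the normal density. -/
noncomputable def Cbound (p : ℕ) (vy : ℝ) : ℝ :=
  (2 * Real.pi * vy) ^ (-(p : ℝ) / 2)

/-- The Bayes rule associated with a (possibly improper) prior measure `M`. -/
noncomputable def bayesM (p : ℕ) (vx vy : ℝ) (M : Measure (EuclideanSpace ℝ (Fin p)))
    (x y : EuclideanSpace ℝ (Fin p)) : ℝ :=
  (∫ μ, gauss p vx μ x * gauss p vy μ y ∂M) / ∫ μ, gauss p vx μ x ∂M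

namespace KLAux

section

theorem integrable_exp_neg_mul_sq_norm (p : ℕ) (b : ℝ) (hb : 0 < b) :
    Integrable (fun y : EuclideanSpace ℝ (Fin p) => Real.exp (-b * ‖y‖ ^ 2)) := by
  have := (GaussianFourier.integrable_cexp_neg_mul_sq_norm_add
    (V := EuclideanSpace ℝ (Fin p)) (b := (b : ℂ)) (by simpa using hb) 0 0).norm
  refine this.congr ?_
  filter_upwards with y
  rw [Complex.norm_exp]
  norm_num
  left
  norm_cast

theorem integrable_exp_neg_mul_sq_norm_sub (p : ℕ) (b : ℝ) (hb : 0 < b)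
    (μ : EuclideanSpace ℝ (Fin p)) :
    Integrable (fun y : EuclideanSpace ℝ (Fin p) => Real.exp (-b * ‖y - μ‖ ^ 2)) := by
  have h := integrable_exp_neg_mul_sq_norm p b hb
  have hmp : MeasurePreserving (fun y : EuclideanSpace ℝ (Fin p) => y - μ) volume volume :=
    measurePreserving_sub_right volume μ
  exact (hmp.integrable_comp_emb (MeasurableEquiv.subRight μ).measurableEmbedding).2 h

variable {p : ℕ} {vy : ℝ} {μ : EuclideanSpace ℝ (Fin p)}

theorem gauss_pos (hvy : 0 < vy) (y : EuclideanSpace ℝ (Fin p)) : 0 < gauss p vy μ y := by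
  have := Real.pi_pos
  unfold gauss
  positivity

theorem gauss_meas : Measurable (gauss p vy μ) := by
  unfold gauss; fun_prop

theorem integrable_gauss (hvy : 0 < vy) : Integrable (gauss p vy μ) := by
  have h := (integrable_exp_neg_mul_sq_norm_sub p (1/(2*vy)) (by positivity) μ).const_mul
    ((2 * Real.pi * vy) ^ (-(p : ℝ) / 2))
  refine h.congr ?_
  filter_upwards with y
  unfold gauss
  congr 1
  congr 1
  field_simp

theorem integrable_gauss_mul_sq (hvy : 0 < vy) :
    Integrable (fun y => gauss p vy μ y * ‖y - μ‖ ^ 2) := by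
  have hcpos : (0:ℝ) < (2 * Real.pi * vy) ^ (-(p : ℝ) / 2) := by
    have := Real.pi_pos; positivity
  have hbd := (integrable_exp_neg_mul_sq_norm_sub p (1/(4*vy)) (by positivity) μ).const_mul
    ((2 * Real.pi * vy) ^ (-(p : ℝ) / 2) * (4 * vy))
  refine hbd.mono' ((gauss_meas.mul (by fun_prop)).aestronglyMeasurable) ?_
  filter_upwards with y
  set t : ℝ := ‖y - μ‖ ^ 2 with ht
  set a : ℝ := 1/(4*vy) with ha
  have hapos : 0 < a := by positivity
  set e : ℝ := Real.exp (-a * t) with he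
  have htn : 0 ≤ t := by positivity
  have he1 : (0:ℝ) < e := Real.exp_pos _
  have h1 : a * t + 1 ≤ Real.exp (a * t) := Real.add_one_le_exp _
  have he3 : Real.exp (a * t) * e = 1 := by
    rw [he, ← Real.exp_add, show a * t + -a * t = 0 by ring, Real.exp_zero]
  have h4 : (a * t + 1) * e ≤ 1 := by
    calc (a * t + 1) * e ≤ Real.exp (a * t) * e := mul_le_mul_of_nonneg_right h1 he1.le
      _ = 1 := he3
  have h6 : a * (t * e) ≤ 1 := by nlinarith
  have key : t * e ≤ 4 * vy := by
    calc t * e = (4 * vy) * (a * (t * e)) := by rw [ha]; field_simp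
      _ ≤ (4 * vy) * 1 := by
          exact mul_le_mul_of_nonneg_left h6 (by positivity)
      _ = 4 * vy := mul_one _
  have h2 : Real.exp (-t / (2*vy)) = e * e := by
    rw [he, ← Real.exp_add]; congr 1; rw [ha]; field_simp; ring
  have hnorm : ‖gauss p vy μ y * t‖
      = (2 * Real.pi * vy) ^ (-(p : ℝ) / 2) * Real.exp (-t/(2*vy)) * t := by
    rw [Real.norm_eq_abs, abs_of_nonneg]
    · rfl
    · have := gauss_pos hvy (μ := μ) y; positivity
  rw [hnorm, h2]
  calc (2 * Real.pi * vy) ^ (-(p : ℝ) / 2) * (e * e) * t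
      = ((2 * Real.pi * vy) ^ (-(p : ℝ) / 2) * e) * (t * e) := by ring
    _ ≤ ((2 * Real.pi * vy) ^ (-(p : ℝ) / 2) * e) * (4 * vy) := by
        exact mul_le_mul_of_nonneg_left key (by positivity)
    _ = (2 * Real.pi * vy) ^ (-(p : ℝ) / 2) * (4 * vy) * e := by ring

theorem integral_gauss_pos (hvy : 0 < vy) : 0 < ∫ y, gauss p vy μ y := by
  rw [integral_pos_iff_support_of_nonneg_ae
    (Filter.Eventually.of_forall fun y => (gauss_pos hvy y).le) (integrable_gauss hvy)]
  have : Function.support (gauss p vy μ) = Set.univ := by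
    ext y; simp [Function.mem_support, (gauss_pos hvy y).ne']
  rw [this]
  exact isOpen_univ.measure_pos volume ⟨0, trivial⟩

theorem gauss_log_gauss_eq (hvy : 0 < vy) (y : EuclideanSpace ℝ (Fin p)) :
    gauss p vy μ y * Real.log (gauss p vy μ y)
      = Real.log ((2 * Real.pi * vy) ^ (-(p : ℝ) / 2)) * gauss p vy μ y
        - (2*vy)⁻¹ * (gauss p vy μ y * ‖y - μ‖ ^ 2) := by
  have hcpos : (0:ℝ) < (2 * Real.pi * vy) ^ (-(p : ℝ) / 2) := by
    have := Real.pi_pos; positivity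
  have h : Real.log (gauss p vy μ y)
      = Real.log ((2 * Real.pi * vy) ^ (-(p : ℝ) / 2)) + (-‖y - μ‖ ^ 2 / (2 * vy)) := by
    unfold gauss
    rw [Real.log_mul hcpos.ne' (Real.exp_pos _).ne', Real.log_exp]
  rw [h]; field_simp; ring

theorem integrable_gauss_mul_log_gauss (hvy : 0 < vy) :
    Integrable (fun y => gauss p vy μ y * Real.log (gauss p vy μ y)) := by
  have h := ((integrable_gauss (μ := μ) hvy).const_mul
      (Real.log ((2 * Real.pi * vy) ^ (-(p : ℝ) / 2)))).sub
    ((integrable_gauss_mul_sq (μ := μ) hvy).const_mul (2*vy)⁻¹)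
  exact h.congr (Filter.Eventually.of_forall fun y => (gauss_log_gauss_eq hvy y).symm)

theorem key_ineq {a b c : ℝ} (ha : 0 < a) (hb : 0 < b) (hc : 0 < c) :
    a * (1 + Real.log c) - c * b ≤ a * Real.log (a / b) := by
  have h1 : Real.log (c * b / a) ≤ c * b / a - 1 :=
    Real.log_le_sub_one_of_pos (by positivity)
  have h2 : Real.log (c * b / a) = Real.log c + Real.log b - Real.log a := by
    rw [Real.log_div (by positivity) ha.ne', Real.log_mul hc.ne' hb.ne']
  have h3 : Real.log (a / b) = Real.log a - Real.log b := Real.log_div ha.ne' hb.ne'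
  rw [h2] at h1
  rw [h3]
  have h4 : a * (Real.log c + Real.log b - Real.log a) ≤ a * (c * b / a - 1) :=
    mul_le_mul_of_nonneg_left h1 ha.le
  have h5 : a * (c * b / a) = c * b := by field_simp
  nlinarith

theorem not_bounded_log {c R : ℝ} (hc : 0 < c)
    (h : ∀ n : ℕ, c * Real.log (n + 1) ≤ R) : False := by
  obtain ⟨n, hn⟩ := exists_nat_gt (Real.exp (R / c))
  have h1 : R / c < Real.log (n + 1) := by
    rw [← Real.log_exp (R / c)]
    exact Real.log_lt_log (Real.exp_pos _) (by linarith [Nat.cast_nonneg (α := ℝ) n])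
  have h2 := h n
  rw [div_lt_iff₀ hc] at h1
  nlinarith

theorem aesm_of_branch (hvy : 0 < vy) (gg : EuclideanSpace ℝ (Fin p) → ℝ)
    (hpos : ∀ᵐ y, 0 < gg y)
    (hi : AEStronglyMeasurable
      (fun y => gauss p vy μ y * Real.log (gauss p vy μ y / gg y)) volume) :
    AEStronglyMeasurable gg volume := by
  have hm : AEMeasurable (fun y => gauss p vy μ y /
      Real.exp ((gauss p vy μ y * Real.log (gauss p vy μ y / gg y)) / gauss p vy μ y)) volume := by
    exact (gauss_meas (μ := μ)).aemeasurable.div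
      ((Real.measurable_exp.comp_aemeasurable (hi.aemeasurable.div
        (gauss_meas (μ := μ)).aemeasurable)))
  refine (aestronglyMeasurable_iff_aemeasurable.2 (hm.congr ?_))
  filter_upwards [hpos] with y hy
  have hg := gauss_pos (μ := μ) hvy y
  have h1 : gauss p vy μ y * Real.log (gauss p vy μ y / gg y) / gauss p vy μ y
      = Real.log (gauss p vy μ y / gg y) := by field_simp
  rw [h1, Real.exp_log (div_pos hg hy)]
  field_simp

theorem klLoss_lower_bound (hvy : 0 < vy)
    (h gg : EuclideanSpace ℝ (Fin p) → ℝ)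
    (hint : Integrable h) (hpos : ∀ y, 0 < h y)
    (hlog : Integrable (fun y => gauss p vy μ y * Real.log (h y)))
    (hggb : ∀ᵐ y, 0 ≤ gg y ∧ gg y ≤ Cbound p vy) :
    ENNReal.ofReal ((∫ y, gauss p vy μ y) + (∫ y, gauss p vy μ y * Real.log (h y))
      - ∫ y, h y * gg y) ≤ klLoss p vy μ gg := by
  unfold klLoss
  split_ifs with hc
  · obtain ⟨hggpos, hggint⟩ := hc
    have hggm : AEStronglyMeasurable gg volume :=
      aesm_of_branch hvy gg hggpos hggint.aestronglyMeasurable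
    have hCb : 0 < Cbound p vy := by
      have := Real.pi_pos; unfold Cbound; positivity
    have hhgg : Integrable (fun y => h y * gg y) := by
      refine (hint.abs.const_mul (Cbound p vy)).mono'
        (hint.aestronglyMeasurable.mul hggm) ?_
      filter_upwards [hggb] with y hy
      rw [Real.norm_eq_abs, abs_mul]
      calc |h y| * |gg y| ≤ |h y| * (Cbound p vy) := by
            refine mul_le_mul_of_nonneg_left ?_ (abs_nonneg _)
            rw [abs_of_nonneg hy.1]; exact hy.2
        _ = Cbound p vy * |h y| := mul_comm _ _
    have hRHS : Integrable (fun y => (gauss p vy μ y + gauss p vy μ y * Real.log (h y))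
        - h y * gg y) := ((integrable_gauss hvy).add hlog).sub hhgg
    have hle : (fun y => (gauss p vy μ y + gauss p vy μ y * Real.log (h y)) - h y * gg y)
        ≤ᵐ[volume] fun y => gauss p vy μ y * Real.log (gauss p vy μ y / gg y) := by
      filter_upwards [hggpos] with y hy
      have := key_ineq (gauss_pos (μ := μ) hvy y) hy (hpos y)
      nlinarith [this]
    have hsum : Integrable (fun y => gauss p vy μ y + gauss p vy μ y * Real.log (h y))
        volume := (integrable_gauss hvy).add hlog
    have hmono := integral_mono_ae hRHS hggint hle
    rw [integral_sub hsum hhgg, integral_add (integrable_gauss hvy) hlog] at hmono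
    exact ENNReal.ofReal_le_ofReal hmono
  · exact le_top

end

end KLAux

open KLAux

/-- **Lemma 4(i)** (lower semicontinuity of the KL loss): if `gᵢ → g` in the weak* sense within
`𝒜*`, then `L(μ, g) ≤ liminf L(μ, gᵢ)` for every `μ`. -/
theorem klLoss_le_liminf_of_weakStar_tendsto
    (p : ℕ) (vy : ℝ) (hvy : 0 < vy)
    (gi : ℕ → EuclideanSpace ℝ (Fin p) → ℝ)
    (g : EuclideanSpace ℝ (Fin p) → ℝ)
    (hgi : ∀ i, (∀ᵐ y, 0 ≤ gi i y ∧ gi i y ≤ Cbound p vy) ∧ (∫ y, gi i y) ≤ 1)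
    (hg : (∀ᵐ y, 0 ≤ g y ∧ g y ≤ Cbound p vy) ∧ (∫ y, g y) ≤ 1)
    (hconv : ∀ f : EuclideanSpace ℝ (Fin p) → ℝ, Integrable f →
      Tendsto (fun i => ∫ y, f y * gi i y) atTop (nhds (∫ y, f y * g y)))
    (μ : EuclideanSpace ℝ (Fin p)) :
    klLoss p vy μ g ≤ Filter.liminf (fun i => klLoss p vy μ (gi i)) atTop := by
  set T := Filter.liminf (fun i => klLoss p vy μ (gi i)) atTop with hT
  by_cases hTtop : T = ⊤
  · rw [hTtop]; exact le_top
  have hCpos : 0 < Cbound p vy := by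
    have := Real.pi_pos; unfold Cbound; positivity
  have hΦpos : ∀ y, 0 < gauss p vy μ y := gauss_pos hvy
  have hΦint : Integrable (gauss p vy μ) := integrable_gauss hvy
  have hΦlog : Integrable (fun y => gauss p vy μ y * Real.log (gauss p vy μ y)) :=
    integrable_gauss_mul_log_gauss hvy
  have hI0 : 0 < ∫ y, gauss p vy μ y := integral_gauss_pos hvy
  set R : ℝ := T.toReal with hR
  -- the key upper bound coming from weak* convergence
  have key : ∀ h : EuclideanSpace ℝ (Fin p) → ℝ, Integrable h → (∀ y, 0 < h y) →
      Integrable (fun y => gauss p vy μ y * Real.log (h y)) →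
      (∫ y, gauss p vy μ y) + (∫ y, gauss p vy μ y * Real.log (h y))
        - (∫ y, h y * g y) ≤ R := by
    intro h hint hpos hlog
    have step1 : ∀ i, ENNReal.ofReal ((∫ y, gauss p vy μ y)
        + (∫ y, gauss p vy μ y * Real.log (h y)) - ∫ y, h y * gi i y)
        ≤ klLoss p vy μ (gi i) :=
      fun i => klLoss_lower_bound hvy h (gi i) hint hpos hlog (hgi i).1
    have htend : Tendsto (fun i => ENNReal.ofReal ((∫ y, gauss p vy μ y)
        + (∫ y, gauss p vy μ y * Real.log (h y)) - ∫ y, h y * gi i y)) atTop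
        (nhds (ENNReal.ofReal ((∫ y, gauss p vy μ y)
          + (∫ y, gauss p vy μ y * Real.log (h y)) - ∫ y, h y * g y))) :=
      (ENNReal.continuous_ofReal.tendsto _).comp (tendsto_const_nhds.sub (hconv h hint))
    have hlim : ENNReal.ofReal ((∫ y, gauss p vy μ y)
        + (∫ y, gauss p vy μ y * Real.log (h y)) - ∫ y, h y * g y) ≤ T := by
      rw [← htend.liminf_eq]
      exact liminf_le_liminf (Eventually.of_forall step1)
    rcases le_or_gt ((∫ y, gauss p vy μ y)
        + (∫ y, gauss p vy μ y * Real.log (h y)) - ∫ y, h y * g y) 0 with h0 | h0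
    · exact h0.trans ENNReal.toReal_nonneg
    · have := ENNReal.toReal_mono hTtop hlim
      rwa [ENNReal.toReal_ofReal h0.le] at this
  -- g is a.e. strongly measurable
  have hgm : AEStronglyMeasurable g volume := by
    by_contra hgm
    have hzero : ∀ n : ℕ, (∫ y, ((n : ℝ) + 1) * gauss p vy μ y * g y) = 0 := by
      intro n
      apply integral_undef
      intro hInt
      apply hgm
      have hq : AEMeasurable (fun y => (((n : ℝ) + 1) * gauss p vy μ y * g y)
          / (((n : ℝ) + 1) * gauss p vy μ y)) volume :=
        hInt.aestronglyMeasurable.aemeasurable.div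
          ((measurable_const.mul (gauss_meas (μ := μ))).aemeasurable)
      refine aestronglyMeasurable_iff_aemeasurable.2 (hq.congr ?_)
      filter_upwards with y
      have : (((n : ℝ) + 1) * gauss p vy μ y) ≠ 0 := by
        have := hΦpos y; positivity
      have h2 : gauss p vy μ y ≠ 0 := (hΦpos y).ne'
      field_simp
    have hbn : ∀ n : ℕ, (∫ y, gauss p vy μ y) * Real.log ((n : ℝ) + 1)
        ≤ R - (∫ y, gauss p vy μ y) - ∫ y, gauss p vy μ y * Real.log (gauss p vy μ y) := by
      intro n
      have hlogn : Integrable (fun y => gauss p vy μ y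
          * Real.log (((n : ℝ) + 1) * gauss p vy μ y)) := by
        refine ((hΦint.const_mul (Real.log ((n : ℝ) + 1))).add hΦlog).congr ?_
        filter_upwards with y
        rw [Real.log_mul (by positivity) (hΦpos y).ne']
        simp only [Pi.add_apply]
        ring
      have hk := key (fun y => ((n : ℝ) + 1) * gauss p vy μ y)
        (hΦint.const_mul _) (fun y => by have := hΦpos y; positivity) hlogn
      have he1 : (∫ y, gauss p vy μ y * Real.log (((n : ℝ) + 1) * gauss p vy μ y))
          = Real.log ((n : ℝ) + 1) * (∫ y, gauss p vy μ y)
            + ∫ y, gauss p vy μ y * Real.log (gauss p vy μ y) := by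
        rw [← integral_const_mul, ← integral_add ((hΦint).const_mul _) hΦlog]
        refine integral_congr_ae (Eventually.of_forall fun y => ?_)
        simp only [Pi.add_apply]
        rw [Real.log_mul (by positivity) (hΦpos y).ne']
        ring
      rw [he1, hzero n] at hk
      linarith
    exact not_bounded_log hI0 hbn
  -- the truncation machinery
  set M : ℕ → EuclideanSpace ℝ (Fin p) → ℝ :=
    fun n y => max (g y) (1 / ((n : ℝ) + 1)) with hM
  have hM0 : ∀ n y, 0 < M n y := fun n y =>
    lt_of_lt_of_le (by positivity) (le_max_right _ _)
  have hMmeas : ∀ n, AEMeasurable (M n) volume := fun n =>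
    hgm.aemeasurable.max aemeasurable_const
  have hMle : ∀ n, ∀ᵐ y, M n y ≤ max (Cbound p vy) 1 := by
    intro n
    filter_upwards [hg.1] with y hy
    exact max_le_max hy.2 (by
      rw [div_le_one (by positivity)]; linarith [Nat.cast_nonneg (α := ℝ) n])
  have hΦlogM : ∀ n, Integrable (fun y => gauss p vy μ y * Real.log (M n y)) := by
    intro n
    set Kn : ℝ := |Real.log (1 / ((n : ℝ) + 1))| + |Real.log (max (Cbound p vy) 1)| with hKn
    refine (hΦint.const_mul Kn).mono'
      (aestronglyMeasurable_iff_aemeasurable.2 ((gauss_meas (μ := μ)).aemeasurable.mul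
        (Real.measurable_log.comp_aemeasurable (hMmeas n)))) ?_
    filter_upwards [hMle n] with y hy
    have h1 : Real.log (1 / ((n : ℝ) + 1)) ≤ Real.log (M n y) :=
      Real.log_le_log (by positivity) (le_max_right _ _)
    have h2 : Real.log (M n y) ≤ Real.log (max (Cbound p vy) 1) :=
      Real.log_le_log (hM0 n y) hy
    have h3 : |Real.log (M n y)| ≤ Kn := by
      rw [abs_le, hKn]
      constructor
      · have := neg_abs_le (Real.log (1 / ((n : ℝ) + 1)))
        have := abs_nonneg (Real.log (max (Cbound p vy) 1))
        linarith
      · have := le_abs_self (Real.log (max (Cbound p vy) 1))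
        have := abs_nonneg (Real.log (1 / ((n : ℝ) + 1)))
        linarith
    rw [Real.norm_eq_abs, abs_mul, abs_of_nonneg (hΦpos y).le]
    calc gauss p vy μ y * |Real.log (M n y)| ≤ gauss p vy μ y * Kn :=
          mul_le_mul_of_nonneg_left h3 (hΦpos y).le
      _ = Kn * gauss p vy μ y := mul_comm _ _
  -- integrability of the truncated test functions
  have hhmeas : ∀ n, AEStronglyMeasurable (fun y => gauss p vy μ y / M n y) volume := fun n =>
    aestronglyMeasurable_iff_aemeasurable.2 ((gauss_meas (μ := μ)).aemeasurable.div (hMmeas n))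
  have hhint : ∀ n, Integrable (fun y => gauss p vy μ y / M n y) := by
    intro n
    refine (hΦint.const_mul ((n : ℝ) + 1)).mono' (hhmeas n) ?_
    filter_upwards with y
    rw [Real.norm_eq_abs, abs_of_nonneg (div_pos (hΦpos y) (hM0 n y)).le,
      div_le_iff₀ (hM0 n y)]
    have h1 : 1 / ((n : ℝ) + 1) ≤ M n y := le_max_right _ _
    have h2 : (1 : ℝ) ≤ ((n : ℝ) + 1) * M n y := by
      calc (1 : ℝ) = ((n : ℝ) + 1) * (1 / ((n : ℝ) + 1)) := by field_simp
        _ ≤ ((n : ℝ) + 1) * M n y := mul_le_mul_of_nonneg_left h1 (by positivity)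
    nlinarith [(hΦpos y).le]
  have hlogh : ∀ n, Integrable
      (fun y => gauss p vy μ y * Real.log (gauss p vy μ y / M n y)) := by
    intro n
    refine (hΦlog.sub (hΦlogM n)).congr (Eventually.of_forall fun y => ?_)
    simp only [Pi.sub_apply]
    rw [Real.log_div (hΦpos y).ne' (hM0 n y).ne']
    ring
  have hkey : ∀ n, (∫ y, gauss p vy μ y)
      + ((∫ y, gauss p vy μ y * Real.log (gauss p vy μ y))
        - ∫ y, gauss p vy μ y * Real.log (M n y))
      - (∫ y, gauss p vy μ y / M n y * g y) ≤ R := by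
    intro n
    have hk := key (fun y => gauss p vy μ y / M n y) (hhint n)
      (fun y => div_pos (hΦpos y) (hM0 n y)) (hlogh n)
    have he : (∫ y, gauss p vy μ y * Real.log (gauss p vy μ y / M n y))
        = (∫ y, gauss p vy μ y * Real.log (gauss p vy μ y))
          - ∫ y, gauss p vy μ y * Real.log (M n y) := by
      rw [← integral_sub hΦlog (hΦlogM n)]
      refine integral_congr_ae (Eventually.of_forall fun y => ?_)
      simp only [Pi.sub_apply]
      rw [Real.log_div (hΦpos y).ne' (hM0 n y).ne']
      ring
    rw [he] at hk
    exact hk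
  have hsint : ∀ n, Integrable (fun y => gauss p vy μ y / M n y * g y) := by
    intro n
    refine hΦint.mono' ((hhmeas n).mul hgm) ?_
    filter_upwards [hg.1] with y hy
    rw [Real.norm_eq_abs,
      abs_of_nonneg (mul_nonneg (div_pos (hΦpos y) (hM0 n y)).le hy.1),
      div_mul_eq_mul_div, div_le_iff₀ (hM0 n y)]
    have := le_max_left (g y) (1 / ((n : ℝ) + 1))
    nlinarith [(hΦpos y).le, hy.1]
  have hs1 : ∀ n, (∫ y, gauss p vy μ y / M n y * g y) ≤ ∫ y, gauss p vy μ y := by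
    intro n
    refine integral_mono_ae (hsint n) hΦint ?_
    filter_upwards [hg.1] with y hy
    rw [div_mul_eq_mul_div, div_le_iff₀ (hM0 n y)]
    have := le_max_left (g y) (1 / ((n : ℝ) + 1))
    nlinarith [(hΦpos y).le, hy.1]
  have hmB : ∀ n, (∫ y, gauss p vy μ y * Real.log (gauss p vy μ y)) - R
      ≤ ∫ y, gauss p vy μ y * Real.log (M n y) := by
    intro n
    have h1 := hkey n
    have h2 := hs1 n
    linarith
  -- the monotone truncation functions in `ℝ≥0∞`
  set K : ℝ := Real.log (max (Cbound p vy) 1) with hKdef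
  have hK0 : 0 ≤ K := Real.log_nonneg (le_max_right _ _)
  have humeas : ∀ n, AEMeasurable (fun y => ENNReal.ofReal
      (K * gauss p vy μ y - gauss p vy μ y * Real.log (M n y))) volume := fun n =>
    ENNReal.measurable_ofReal.comp_aemeasurable
      (((gauss_meas (μ := μ)).aemeasurable.const_mul K).sub
        ((gauss_meas (μ := μ)).aemeasurable.mul
          (Real.measurable_log.comp_aemeasurable (hMmeas n))))
  have humono : ∀ y, Monotone fun n => ENNReal.ofReal
      (K * gauss p vy μ y - gauss p vy μ y * Real.log (M n y)) := by
    intro y a b hab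
    apply ENNReal.ofReal_le_ofReal
    have hMba : M b y ≤ M a y := by
      refine max_le_max le_rfl (one_div_le_one_div_of_le (by positivity) ?_)
      have : (a : ℝ) ≤ (b : ℝ) := by exact_mod_cast hab
      linarith
    have hl := Real.log_le_log (hM0 b y) hMba
    nlinarith [(hΦpos y).le]
  have huint : ∀ n, (∫⁻ y, ENNReal.ofReal
      (K * gauss p vy μ y - gauss p vy μ y * Real.log (M n y)))
      = ENNReal.ofReal (K * (∫ y, gauss p vy μ y)
        - ∫ y, gauss p vy μ y * Real.log (M n y)) := by
    intro n
    have hnn : 0 ≤ᵐ[volume] fun y =>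
        K * gauss p vy μ y - gauss p vy μ y * Real.log (M n y) := by
      filter_upwards [hMle n] with y hy
      have hl : Real.log (M n y) ≤ K := Real.log_le_log (hM0 n y) hy
      show (0:ℝ) ≤ K * gauss p vy μ y - gauss p vy μ y * Real.log (M n y)
      nlinarith [(hΦpos y).le]
    have hint2 : Integrable
        (fun y => K * gauss p vy μ y - gauss p vy μ y * Real.log (M n y)) volume :=
      (hΦint.const_mul K).sub (hΦlogM n)
    calc (∫⁻ y, ENNReal.ofReal (K * gauss p vy μ y - gauss p vy μ y * Real.log (M n y)))
        = ENNReal.ofReal (∫ y, (K * gauss p vy μ y - gauss p vy μ y * Real.log (M n y))) :=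
          (ofReal_integral_eq_lintegral_ofReal hint2 hnn).symm
      _ = ENNReal.ofReal (K * (∫ y, gauss p vy μ y)
            - ∫ y, gauss p vy μ y * Real.log (M n y)) := by
          rw [integral_sub (hΦint.const_mul K) (hΦlogM n), integral_const_mul]
  have hUbound : (∫⁻ y, ⨆ n, ENNReal.ofReal
      (K * gauss p vy μ y - gauss p vy μ y * Real.log (M n y)))
      ≤ ENNReal.ofReal (K * (∫ y, gauss p vy μ y)
        - ((∫ y, gauss p vy μ y * Real.log (gauss p vy μ y)) - R)) := by
    rw [lintegral_iSup' humeas (Eventually.of_forall humono)]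
    refine iSup_le fun n => ?_
    rw [huint n]
    apply ENNReal.ofReal_le_ofReal
    have := hmB n
    linarith
  have hUfin : ∀ᵐ y, (⨆ n, ENNReal.ofReal
      (K * gauss p vy μ y - gauss p vy μ y * Real.log (M n y))) < ⊤ :=
    ae_lt_top' (AEMeasurable.iSup humeas)
      (hUbound.trans_lt ENNReal.ofReal_lt_top).ne
  -- g is a.e. positive
  have hgpos : ∀ᵐ y, 0 < g y := by
    filter_upwards [hUfin] with y hfin
    by_contra hgy
    push_neg at hgy
    have hb : ∀ n : ℕ, gauss p vy μ y * Real.log ((n : ℝ) + 1)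
        ≤ (⨆ n, ENNReal.ofReal
          (K * gauss p vy μ y - gauss p vy μ y * Real.log (M n y))).toReal := by
      intro n
      have hMn : M n y = 1 / ((n : ℝ) + 1) :=
        max_eq_right (le_trans hgy (by positivity))
      have h1 : ENNReal.ofReal (gauss p vy μ y * Real.log ((n : ℝ) + 1))
          ≤ ⨆ n, ENNReal.ofReal
            (K * gauss p vy μ y - gauss p vy μ y * Real.log (M n y)) := by
        refine le_trans (ENNReal.ofReal_le_ofReal ?_)
          (le_iSup (fun n => ENNReal.ofReal
            (K * gauss p vy μ y - gauss p vy μ y * Real.log (M n y))) n)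
        rw [hMn, one_div, Real.log_inv]
        nlinarith [(hΦpos y).le, hK0]
      have h2 := ENNReal.toReal_mono hfin.ne h1
      rwa [ENNReal.toReal_ofReal (mul_nonneg (hΦpos y).le
        (Real.log_nonneg (by linarith [Nat.cast_nonneg (α := ℝ) n])))] at h2
    exact not_bounded_log (hΦpos y) hb
  -- eventually the truncation is exact
  have hMev : ∀ y, 0 < g y → ∃ N : ℕ, ∀ n, N ≤ n → M n y = g y := by
    intro y hy
    obtain ⟨N, hN⟩ := exists_nat_gt (1 / g y)
    refine ⟨N, fun n hn => max_eq_left ?_⟩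
    have hA : 1 / g y < (n : ℝ) + 1 := by
      have : (N : ℝ) ≤ (n : ℝ) := by exact_mod_cast hn
      linarith
    have hB : 1 < g y * ((n : ℝ) + 1) := by
      have := (div_lt_iff₀ hy).1 hA
      nlinarith
    rw [div_le_iff₀ (by positivity)]
    nlinarith
  -- integrability of `Φ log g`
  have hUge : ∀ᵐ y, ENNReal.ofReal (K * gauss p vy μ y - gauss p vy μ y * Real.log (g y))
      ≤ ⨆ n, ENNReal.ofReal
        (K * gauss p vy μ y - gauss p vy μ y * Real.log (M n y)) := by
    filter_upwards [hgpos] with y hy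
    obtain ⟨N, hN⟩ := hMev y hy
    refine le_trans (le_of_eq ?_) (le_iSup (fun n => ENNReal.ofReal
      (K * gauss p vy μ y - gauss p vy μ y * Real.log (M n y))) N)
    rw [hN N le_rfl]
  have hlintfin : (∫⁻ y, ENNReal.ofReal
      (K * gauss p vy μ y - gauss p vy μ y * Real.log (g y))) < ⊤ :=
    lt_of_le_of_lt (lintegral_mono_ae hUge)
      (lt_of_le_of_lt hUbound ENNReal.ofReal_lt_top)
  have hFaesm : AEStronglyMeasurable
      (fun y => K * gauss p vy μ y - gauss p vy μ y * Real.log (g y)) volume :=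
    aestronglyMeasurable_iff_aemeasurable.2
      (((gauss_meas (μ := μ)).aemeasurable.const_mul K).sub
        ((gauss_meas (μ := μ)).aemeasurable.mul
          (Real.measurable_log.comp_aemeasurable hgm.aemeasurable)))
  have hFnn : 0 ≤ᵐ[volume] fun y =>
      K * gauss p vy μ y - gauss p vy μ y * Real.log (g y) := by
    filter_upwards [hg.1, hgpos] with y hy hypos
    have h1 : Real.log (g y) ≤ K :=
      Real.log_le_log hypos (le_trans hy.2 (le_max_left _ _))
    show (0:ℝ) ≤ K * gauss p vy μ y - gauss p vy μ y * Real.log (g y)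
    nlinarith [(hΦpos y).le]
  have hFint : Integrable
      (fun y => K * gauss p vy μ y - gauss p vy μ y * Real.log (g y)) :=
    ⟨hFaesm, (hasFiniteIntegral_iff_ofReal hFnn).2 hlintfin⟩
  have hglog : Integrable (fun y => gauss p vy μ y * Real.log (g y)) := by
    refine ((hΦint.const_mul K).sub hFint).congr (Eventually.of_forall fun y => ?_)
    show K * gauss p vy μ y - (K * gauss p vy μ y - gauss p vy μ y * Real.log (g y))
      = gauss p vy μ y * Real.log (g y)
    ring
  have hbranch : Integrable
      (fun y => gauss p vy μ y * Real.log (gauss p vy μ y / g y)) := by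
    refine (hΦlog.sub hglog).congr ?_
    filter_upwards [hgpos] with y hy
    simp only [Pi.sub_apply]
    rw [Real.log_div (hΦpos y).ne' hy.ne']
    ring
  have hsplit : (∫ y, gauss p vy μ y * Real.log (gauss p vy μ y / g y))
      = (∫ y, gauss p vy μ y * Real.log (gauss p vy μ y))
        - ∫ y, gauss p vy μ y * Real.log (g y) := by
    rw [← integral_sub hΦlog hglog]
    refine integral_congr_ae ?_
    filter_upwards [hgpos] with y hy
    show gauss p vy μ y * Real.log (gauss p vy μ y / g y)
      = gauss p vy μ y * Real.log (gauss p vy μ y) - gauss p vy μ y * Real.log (g y)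
    rw [Real.log_div (hΦpos y).ne' hy.ne']
    ring
  -- convergence of the truncated quantities
  have hmt : Tendsto (fun n => ∫ y, gauss p vy μ y * Real.log (M n y)) atTop
      (nhds (∫ y, gauss p vy μ y * Real.log (g y))) := by
    refine tendsto_integral_of_dominated_convergence
      (fun y => K * gauss p vy μ y + |gauss p vy μ y * Real.log (g y)|)
      (fun n => aestronglyMeasurable_iff_aemeasurable.2
        ((gauss_meas (μ := μ)).aemeasurable.mul
          (Real.measurable_log.comp_aemeasurable (hMmeas n))))
      ((hΦint.const_mul K).add hglog.abs) ?_ ?_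
    · intro n
      filter_upwards [hMle n, hgpos] with y hy hypos
      have h1 := mul_le_mul_of_nonneg_left
        (Real.log_le_log hypos (le_max_left (g y) (1 / ((n : ℝ) + 1)))) (hΦpos y).le
      have h2 := mul_le_mul_of_nonneg_left
        (Real.log_le_log (hM0 n y) hy) (hΦpos y).le
      have h3 := neg_abs_le (gauss p vy μ y * Real.log (g y))
      have h4 := le_abs_self (gauss p vy μ y * Real.log (g y))
      have h5 : 0 ≤ K * gauss p vy μ y := mul_nonneg hK0 (hΦpos y).le
      rw [Real.norm_eq_abs, abs_le]
      constructor <;> linarith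
    · filter_upwards [hgpos] with y hy
      obtain ⟨N, hN⟩ := hMev y hy
      refine tendsto_const_nhds.congr' ?_
      filter_upwards [eventually_ge_atTop N] with n hn
      rw [hN n hn]
  have hst : Tendsto (fun n => ∫ y, gauss p vy μ y / M n y * g y) atTop
      (nhds (∫ y, gauss p vy μ y)) := by
    refine tendsto_integral_of_dominated_convergence (fun y => gauss p vy μ y)
      (fun n => (hhmeas n).mul hgm) hΦint ?_ ?_
    · intro n
      filter_upwards [hg.1] with y hy
      rw [Real.norm_eq_abs,
        abs_of_nonneg (mul_nonneg (div_pos (hΦpos y) (hM0 n y)).le hy.1),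
        div_mul_eq_mul_div, div_le_iff₀ (hM0 n y)]
      have := le_max_left (g y) (1 / ((n : ℝ) + 1))
      nlinarith [(hΦpos y).le, hy.1]
    · filter_upwards [hgpos] with y hy
      obtain ⟨N, hN⟩ := hMev y hy
      refine tendsto_const_nhds.congr' ?_
      filter_upwards [eventually_ge_atTop N] with n hn
      rw [hN n hn]
      field_simp
  -- conclusion
  have hfinal : (∫ y, gauss p vy μ y * Real.log (gauss p vy μ y))
      - (∫ y, gauss p vy μ y * Real.log (g y)) ≤ R := by
    have htend : Tendsto (fun n => (∫ y, gauss p vy μ y)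
        + ((∫ y, gauss p vy μ y * Real.log (gauss p vy μ y))
          - ∫ y, gauss p vy μ y * Real.log (M n y))
        - ∫ y, gauss p vy μ y / M n y * g y) atTop
        (nhds ((∫ y, gauss p vy μ y)
          + ((∫ y, gauss p vy μ y * Real.log (gauss p vy μ y))
            - ∫ y, gauss p vy μ y * Real.log (g y))
          - ∫ y, gauss p vy μ y)) :=
      (tendsto_const_nhds.add (tendsto_const_nhds.sub hmt)).sub hst
    have := le_of_tendsto htend (Eventually.of_forall hkey)
    linarith
  have hklg : klLoss p vy μ g = ENNReal.ofReal
      (∫ y, gauss p vy μ y * Real.log (gauss p vy μ y / g y)) := by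
    unfold klLoss
    rw [if_pos ⟨hgpos, hbranch⟩]
  rw [hklg, hsplit]
  calc ENNReal.ofReal ((∫ y, gauss p vy μ y * Real.log (gauss p vy μ y))
        - ∫ y, gauss p vy μ y * Real.log (g y))
      ≤ ENNReal.ofReal R := ENNReal.ofReal_le_ofReal hfinal
    _ = T := by rw [hR]; exact ENNReal.ofReal_toReal hTtop
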